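/- With Λ and R(λ) as above, for λ, μ ∈ P¹(k): Ext¹ computed in the subcategory D (extensions of direct sums of R(ν), ν ∈ k, by direct sums of R(∞)) satisfies Ext¹_D(R(λ), R(μ)) ≅ k if λ ∈ k and μ = ∞, and Ext¹_D(R(λ), R(μ)) = 0 otherwise. -/

import Mathlib

/-- A finite-dimensional module over Λ = k⟨quiver with vertices 0,1, arrows
α₀, α₁ : 1 → 0, β : 0 → 1⟩/(βα₀β, βα₁β), viewed as a representation:
spaces V0, V1, maps a0, a1 : V1 → V0 and b : V0 → V1 with b∘aᵢ∘b = 0. -/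
structure LRep (k : Type) [Field k] where
  V0 : Type
  V1 : Type
  [acg0 : AddCommGroup V0]
  [acg1 : AddCommGroup V1]
  [mod0 : Module k V0]
  [mod1 : Module k V1]
  fd0 : FiniteDimensional k V0
  fd1 : FiniteDimensional k V1
  a0 : V1 →ₗ[k] V0
  a1 : V1 →ₗ[k] V0
  b : V0 →ₗ[k] V1
  rel0 : b ∘ₗ a0 ∘ₗ b = 0
  rel1 : b ∘ₗ a1 ∘ₗ b = 0

attribute [instance] LRep.acg0 LRep.acg1 LRep.mod0 LRep.mod1

variable {k : Type} [Field k]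

/-- A homomorphism of Λ-modules. -/
structure LHom (M N : LRep k) where
  f0 : M.V0 →ₗ[k] N.V0
  f1 : M.V1 →ₗ[k] N.V1
  comma0 : f0 ∘ₗ M.a0 = N.a0 ∘ₗ f1
  comma1 : f0 ∘ₗ M.a1 = N.a1 ∘ₗ f1
  commb : f1 ∘ₗ M.b = N.b ∘ₗ f0

/-- The Λ-modules R(λ), λ ∈ P¹(k) = k ∪ {∞} (`none` = ∞): the simple regular
Kronecker modules R(λ) = (k, k; id, λ·id) for λ ∈ k and R(∞) = (k, k; 0, id),
with β acting as zero. -/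
def LR : Option k → LRep k
  | some l =>
    { V0 := k, V1 := k, fd0 := inferInstance, fd1 := inferInstance
      a0 := LinearMap.id, a1 := l • LinearMap.id, b := 0
      rel0 := by simp, rel1 := by simp }
  | none =>
    { V0 := k, V1 := k, fd0 := inferInstance, fd1 := inferInstance
      a0 := 0, a1 := LinearMap.id, b := 0
      rel0 := by simp, rel1 := by simp }

/-- An extension 0 → B → E → A → 0 of Λ-modules. -/
structure LExt (A B : LRep k) where
  E : LRep k
  i : LHom B E
  p : LHom E A
  inj0 : Function.Injective i.f0
  inj1 : Function.Injective i.f1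
  surj0 : Function.Surjective p.f0
  surj1 : Function.Surjective p.f1
  exact0 : LinearMap.range i.f0 = LinearMap.ker p.f0
  exact1 : LinearMap.range i.f1 = LinearMap.ker p.f1

/-- An extension splits iff the inclusion admits a retraction. -/
def LExt.Splits {A B : LRep k} (X : LExt A B) : Prop :=
  ∃ r : LHom X.E B, (∀ x, r.f0 (X.i.f0 x) = x) ∧ (∀ x, r.f1 (X.i.f1 x) = x)

/-- A pair of subspaces of a Λ-module closed under α₀, α₁ and β. -/
def LSubrep (M : LRep k) (p0 : Submodule k M.V0) (p1 : Submodule k M.V1) : Prop :=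
  (∀ x ∈ p1, M.a0 x ∈ p0) ∧ (∀ x ∈ p1, M.a1 x ∈ p0) ∧ (∀ x ∈ p0, M.b x ∈ p1)

/-- Membership in the subcategory D: M has a submodule M' (given by (p0, p1))
which is a direct sum of copies of R(∞) — i.e. on (p0, p1) the map α₀ and β
vanish and α₁ is an isomorphism p1 ≅ p0 — such that M/M' is a direct sum of
modules R(ν) with ν ∈ k — i.e. on the quotient β vanishes, the induced map α₀
is an isomorphism and the induced α₁ equals g ∘ α₀ for a diagonalizable
endomorphism g (its eigenspaces for eigenvalues ν ∈ k exhaust the quotient). -/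
def InD (M : LRep k) : Prop :=
  ∃ (p0 : Submodule k M.V0) (p1 : Submodule k M.V1),
    LSubrep M p0 p1 ∧
    (∀ x ∈ p1, M.a0 x = 0) ∧
    Submodule.map M.a1 p1 = p0 ∧
    (∀ x ∈ p1, M.a1 x = 0 → x = 0) ∧
    (∀ x ∈ p0, M.b x = 0) ∧
    (∀ x : M.V0, M.b x ∈ p1) ∧
    ∀ (h0 : p1 ≤ p0.comap M.a0) (h1 : p1 ≤ p0.comap M.a1),
      Function.Bijective (Submodule.mapQ p1 p0 M.a0 h0) ∧
      ∃ g : Module.End k (M.V0 ⧸ p0),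
        Submodule.mapQ p1 p0 M.a1 h1 = g ∘ₗ Submodule.mapQ p1 p0 M.a0 h0 ∧
        (⨆ ν : k, g.eigenspace ν) = ⊤


/-!
A splitting of an extension `0 → R(μ) → E → R(λ) → 0` amounts to a lift `e ∈ E₁` of the
generator of `R(λ)` on which `α₀, α₁, β` act as on `R(λ)`, so each case comes down to finding
such a lift.

* `λ = ∞`: surjectivity of `α₀` modulo the `R(∞)`-part `M'` of `E` gives a lift inside `M'`,
  where `α₀` and `β α₁` vanish.
* `λ, μ ∈ k`: `α₀` is injective on `E`, so `M' = 0`, `β = 0` and `E` is a sum of modules `R(ν)`;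
  an eigenvector of `α₁ α₀⁻¹` outside `R(μ)` has eigenvalue `λ` and is the lift.
* `λ ∈ k`, `μ = ∞`: a lift with `α₁ e = λ α₀ e` always exists, and `β α₀ e = t • u` for the
  generator `u` of `R(∞)`. The extension splits iff `t = 0`, and rescaling `R(∞)` by `t' / t`
  identifies the extensions with parameters `t` and `t'`.
-/

lemma LinearMap.exists_retraction_of_section {R M N P : Type*} [Ring R] [AddCommGroup M]
    [AddCommGroup N] [AddCommGroup P] [Module R M] [Module R N] [Module R P]
    {f : M →ₗ[R] N} {g : N →ₗ[R] P} (hf : Function.Injective f) (hfg : Function.Exact f g)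
    (s : P →ₗ[R] N) (hs : ∀ x, g (s x) = x) :
    ∃ r : N →ₗ[R] M, (∀ x, r (f x) = x) ∧ ∀ v, f (r v) = v - s (g v) := by
  have hmem : ∀ v, v - s (g v) ∈ range f := fun v => (hfg _).mp (by simp [hs])
  let r := (LinearEquiv.ofInjective f hf).symm.toLinearMap ∘ₗ
    (LinearMap.id - s ∘ₗ g).codRestrict (range f) hmem
  have hr : ∀ v, f (r v) = v - s (g v) := fun v => by simp [r]
  exact ⟨r, fun x => hf (by simp [hr, hfg.apply_apply_eq_zero]), hr⟩

lemma Module.End.exists_mem_eigenspace_apply_ne_zero {R V W : Type*} [CommRing R]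
    [AddCommGroup V] [Module R V] [AddCommGroup W] [Module R W] {T : Module.End R V}
    (hT : ⨆ ν, T.eigenspace ν = ⊤) {φ : V →ₗ[R] W} (hφ : φ ≠ 0) :
    ∃ ν, ∃ w ∈ T.eigenspace ν, φ w ≠ 0 := by
  by_contra! h
  exact hφ <| LinearMap.ker_eq_top.mp <| eq_top_iff.mpr <| hT ▸ iSup_le fun ν w hw => h ν w hw

section ExactSequence

variable {V V' : Type*} [AddCommGroup V] [Module k V] [AddCommGroup V'] [Module k V']
  {i : k →ₗ[k] V} {p : V →ₗ[k] k} {e : V} {i' : k →ₗ[k] V'} {p' : V' →ₗ[k] k} {e' : V'}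
  (hi : Function.Injective i) (hip : Function.Exact i p) (he : p e = 1)
  (hi' : Function.Injective i') (hip' : Function.Exact i' p') (he' : p' e' = 1)
  {c : k} (hc : c ≠ 0)

noncomputable def basisOfExact : Module.Basis (Fin 2) k V :=
  Module.Basis.mk (v := ![i c, e])
    (LinearIndependent.pair_iff.mpr fun s t hst => by
      have ht : t = 0 := by simpa [hip.apply_apply_eq_zero, he] using congrArg p hst
      subst ht
      rw [zero_smul, add_zero, ← map_smul, ← i.map_zero] at hst
      exact ⟨(mul_eq_zero.mp (hi hst)).resolve_right hc, rfl⟩)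
    (fun v _ => by
      obtain ⟨x, hx⟩ := (hip (v - p v • e)).mp (by simp [he])
      rw [Matrix.range_cons_cons_empty, Submodule.mem_span_pair]
      refine ⟨x / c, p v, ?_⟩
      rw [← map_smul, smul_eq_mul, div_mul_cancel₀ x hc, hx, sub_add_cancel])

@[simp] lemma coe_basisOfExact : ⇑(basisOfExact hi hip he hc) = ![i c, e] := by
  simp [basisOfExact]

noncomputable def exactEquiv : V ≃ₗ[k] V' :=
  (basisOfExact hi hip he one_ne_zero).equiv (basisOfExact hi' hip' he' hc) (Equiv.refl _)

lemma exactEquiv_apply_lift : exactEquiv hi hip he hi' hip' he' hc e = e' := by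
  simpa [exactEquiv] using
    (basisOfExact hi hip he one_ne_zero).equiv_apply 1 (basisOfExact hi' hip' he' hc) (Equiv.refl _)

lemma exactEquiv_apply_incl (x : k) :
    exactEquiv hi hip he hi' hip' he' hc (i x) = i' (c * x) := by
  have h1 := (basisOfExact hi hip he one_ne_zero).equiv_apply 0 (basisOfExact hi' hip' he' hc)
    (Equiv.refl _)
  simp only [coe_basisOfExact, Matrix.cons_val_zero, Equiv.refl_apply] at h1
  rw [show i x = x • i 1 by rw [← map_smul, smul_eq_mul, mul_one], map_smul, exactEquiv, h1,
    ← map_smul, smul_eq_mul, mul_comm]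

lemma proj_exactEquiv (v : V) : p' (exactEquiv hi hip he hi' hip' he' hc v) = p v := by
  refine LinearMap.congr_fun
    ((basisOfExact hi hip he one_ne_zero).ext (f₁ := p' ∘ₗ _) fun j => ?_) v
  fin_cases j
  · simp [exactEquiv_apply_incl, hip.apply_apply_eq_zero, hip'.apply_apply_eq_zero]
  · simp [exactEquiv_apply_lift, he, he']

end ExactSequence

namespace LHom

variable {M N : LRep k} (f : LHom M N)

@[simp] lemma map_a0 (v : M.V1) : f.f0 (M.a0 v) = N.a0 (f.f1 v) := LinearMap.congr_fun f.comma0 v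

@[simp] lemma map_a1 (v : M.V1) : f.f0 (M.a1 v) = N.a1 (f.f1 v) := LinearMap.congr_fun f.comma1 v

@[simp] lemma map_b (v : M.V0) : f.f1 (M.b v) = N.b (f.f0 v) := LinearMap.congr_fun f.commb v

end LHom

namespace LR

def homOfSome (l : k) {M : LRep k} (e : M.V1) (ha1 : M.a1 e = l • M.a0 e)
    (hb : M.b (M.a0 e) = 0) : LHom (LR (some l)) M where
  f0 := LinearMap.toSpanSingleton k M.V0 (M.a0 e)
  f1 := LinearMap.toSpanSingleton k M.V1 e
  comma0 := LinearMap.ext fun (x : k) => show x • M.a0 e = M.a0 (x • e) by simp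
  comma1 := LinearMap.ext fun (x : k) => show (l * x) • M.a0 e = M.a1 (x • e) by
    simp [ha1, smul_smul, mul_comm]
  commb := LinearMap.ext fun (x : k) => show (0 : k) • e = M.b (x • M.a0 e) by simp [hb]

def homOfNone {M : LRep k} (e : M.V1) (ha0 : M.a0 e = 0) (hb : M.b (M.a1 e) = 0) :
    LHom (LR none) M where
  f0 := LinearMap.toSpanSingleton k M.V0 (M.a1 e)
  f1 := LinearMap.toSpanSingleton k M.V1 e
  comma0 := LinearMap.ext fun (x : k) => show (0 : k) • M.a1 e = M.a0 (x • e) by simp [ha0]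
  comma1 := LinearMap.ext fun (x : k) => show x • M.a1 e = M.a1 (x • e) by simp
  commb := LinearMap.ext fun (x : k) => show (0 : k) • e = M.b (x • M.a1 e) by simp [hb]

end LR

namespace InD

variable {M : LRep k}

/-- `α₀` vanishes on `M'`, so `M' = 0`, and `β` maps into `M'`. -/
lemma b_eq_zero (hD : InD M) (ha0 : Function.Injective M.a0) (v : M.V0) : M.b v = 0 := by
  obtain ⟨-, q1, -, hq1a0, -, -, -, hb, -⟩ := hD
  exact ha0 (by rw [hq1a0 _ (hb v), map_zero])

/-- Here `M' = 0`, so the eigenvectors of `α₁ α₀⁻¹` span `M₀` and cannot all lie in `ker φ`. -/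
lemma exists_a1_eq_smul_a0 (hD : InD M) (ha0 : Function.Injective M.a0)
    {φ : M.V0 →ₗ[k] k} (hφ : φ ≠ 0) :
    ∃ (ν : k) (v : M.V1), M.a1 v = ν • M.a0 v ∧ φ (M.a0 v) ≠ 0 := by
  obtain ⟨q0, q1, ⟨h0, h1, -⟩, hq1a0, hmap, -, -, -, hquot⟩ := hD
  have hq1 : q1 = ⊥ :=
    eq_bot_iff.mpr fun v hv => (Submodule.mem_bot k).mpr (ha0 (by rw [hq1a0 v hv, map_zero]))
  have hq0 : q0 = ⊥ := by rw [← hmap, hq1, Submodule.map_bot]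
  subst hq1 hq0
  obtain ⟨⟨-, hsurj⟩, T, hT, heig⟩ := hquot h0 h1
  have hφ' : (⊥ : Submodule k M.V0).liftQ φ bot_le ≠ 0 := fun h =>
    hφ (by rw [← Submodule.liftQ_mkQ _ φ bot_le, h, LinearMap.zero_comp])
  obtain ⟨ν, w, hw, hφw⟩ := Module.End.exists_mem_eigenspace_apply_ne_zero heig hφ'
  obtain ⟨v', rfl⟩ := hsurj w
  obtain ⟨v, rfl⟩ := Submodule.mkQ_surjective _ v'
  refine ⟨ν, v, ?_, by simpa using hφw⟩
  have hTv := LinearMap.congr_fun hT (Submodule.mkQ _ v)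
  rw [LinearMap.comp_apply, Module.End.mem_eigenspace_iff.mp hw] at hTv
  simpa [← Submodule.Quotient.mk_smul, Submodule.Quotient.eq, sub_eq_zero] using hTv

end InD

namespace LExt

variable {A B : LRep k} {l m : Option k}

theorem splits_of_section (X : LExt A B) (s : LHom A X.E) (hs0 : ∀ x, X.p.f0 (s.f0 x) = x)
    (hs1 : ∀ x, X.p.f1 (s.f1 x) = x) : X.Splits := by
  obtain ⟨r0, hri0, hr0⟩ := LinearMap.exists_retraction_of_section X.inj0
    (LinearMap.exact_iff.mpr X.exact0.symm) s.f0 hs0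
  obtain ⟨r1, hri1, hr1⟩ := LinearMap.exists_retraction_of_section X.inj1
    (LinearMap.exact_iff.mpr X.exact1.symm) s.f1 hs1
  refine ⟨⟨r0, r1, LinearMap.ext fun v => X.inj0 ?_, LinearMap.ext fun v => X.inj0 ?_,
    LinearMap.ext fun v => X.inj1 ?_⟩, hri0, hri1⟩ <;> simp [hr0, hr1]

/- The components of an extension of `R(λ)` by `R(μ)` as maps to and from `k` itself: the spaces
of `LR l` are `k` only after unfolding `LR` at a known `l` (hence the case split), which `simp`
does not do. -/

def proj0 : {l : Option k} → (X : LExt (LR l) B) → (X.E.V0 →ₗ[k] k)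
  | some _, X => X.p.f0
  | none, X => X.p.f0

def proj1 : {l : Option k} → (X : LExt (LR l) B) → (X.E.V1 →ₗ[k] k)
  | some _, X => X.p.f1
  | none, X => X.p.f1

def incl0 : {m : Option k} → (X : LExt A (LR m)) → (k →ₗ[k] X.E.V0)
  | some _, X => X.i.f0
  | none, X => X.i.f0

def incl1 : {m : Option k} → (X : LExt A (LR m)) → (k →ₗ[k] X.E.V1)
  | some _, X => X.i.f1
  | none, X => X.i.f1

lemma proj0_surjective (X : LExt (LR l) B) : Function.Surjective X.proj0 := by
  cases l <;> exact X.surj0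

lemma proj1_surjective (X : LExt (LR l) B) : Function.Surjective X.proj1 := by
  cases l <;> exact X.surj1

lemma incl0_injective (X : LExt A (LR m)) : Function.Injective X.incl0 := by
  cases m <;> exact X.inj0

lemma incl1_injective (X : LExt A (LR m)) : Function.Injective X.incl1 := by
  cases m <;> exact X.inj1

lemma exact_incl0_proj0 (X : LExt (LR l) (LR m)) : Function.Exact X.incl0 X.proj0 := by
  cases l <;> cases m <;> exact LinearMap.exact_iff.mpr X.exact0.symm

lemma exact_incl1_proj1 (X : LExt (LR l) (LR m)) : Function.Exact X.incl1 X.proj1 := by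
  cases l <;> cases m <;> exact LinearMap.exact_iff.mpr X.exact1.symm

@[simp] lemma proj0_incl0 (X : LExt (LR l) (LR m)) (x : k) : X.proj0 (X.incl0 x) = 0 :=
  X.exact_incl0_proj0.apply_apply_eq_zero x

@[simp] lemma proj1_incl1 (X : LExt (LR l) (LR m)) (x : k) : X.proj1 (X.incl1 x) = 0 :=
  X.exact_incl1_proj1.apply_apply_eq_zero x

lemma exists_incl0_eq (X : LExt (LR l) (LR m)) {v : X.E.V0} (hv : X.proj0 v = 0) :
    ∃ x, X.incl0 x = v :=
  (X.exact_incl0_proj0 v).mp hv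

lemma exists_incl1_eq (X : LExt (LR l) (LR m)) {v : X.E.V1} (hv : X.proj1 v = 0) :
    ∃ x, X.incl1 x = v :=
  (X.exact_incl1_proj1 v).mp hv

@[simp] lemma proj0_a0_some {c : k} (X : LExt (LR (some c)) B) (v : X.E.V1) :
    X.proj0 (X.E.a0 v) = X.proj1 v :=
  LinearMap.congr_fun X.p.comma0 v

@[simp] lemma proj0_a1_some {c : k} (X : LExt (LR (some c)) B) (v : X.E.V1) :
    X.proj0 (X.E.a1 v) = c * X.proj1 v :=
  LinearMap.congr_fun X.p.comma1 v

@[simp] lemma proj0_a0_none (X : LExt (LR none) B) (v : X.E.V1) : X.proj0 (X.E.a0 v) = 0 :=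
  LinearMap.congr_fun X.p.comma0 v

@[simp] lemma proj0_a1_none (X : LExt (LR none) B) (v : X.E.V1) :
    X.proj0 (X.E.a1 v) = X.proj1 v :=
  LinearMap.congr_fun X.p.comma1 v

@[simp] lemma proj1_b (X : LExt (LR l) B) (v : X.E.V0) : X.proj1 (X.E.b v) = 0 := by
  cases l <;> exact LinearMap.congr_fun X.p.commb v

@[simp] lemma a0_incl1_some {c : k} (X : LExt A (LR (some c))) (x : k) :
    X.E.a0 (X.incl1 x) = X.incl0 x :=
  (LinearMap.congr_fun X.i.comma0 x).symm

@[simp] lemma a1_incl1_some {c : k} (X : LExt A (LR (some c))) (x : k) :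
    X.E.a1 (X.incl1 x) = c • X.incl0 x :=
  (LinearMap.congr_fun X.i.comma1 x).symm.trans (X.incl0.map_smul c x)

@[simp] lemma a0_incl1_none (X : LExt A (LR none)) (x : k) : X.E.a0 (X.incl1 x) = 0 :=
  (LinearMap.congr_fun X.i.comma0 x).symm.trans X.incl0.map_zero

@[simp] lemma a1_incl1_none (X : LExt A (LR none)) (x : k) :
    X.E.a1 (X.incl1 x) = X.incl0 x :=
  (LinearMap.congr_fun X.i.comma1 x).symm

@[simp] lemma b_incl0 (X : LExt A (LR m)) (x : k) : X.E.b (X.incl0 x) = 0 := by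
  cases m <;> exact (LinearMap.congr_fun X.i.commb x).symm.trans X.incl1.map_zero

theorem splits_of_lift_some {c : k} (X : LExt (LR (some c)) B) {e : X.E.V1}
    (he : X.proj1 e = 1) (ha1 : X.E.a1 e = c • X.E.a0 e) (hb : X.E.b (X.E.a0 e) = 0) :
    X.Splits :=
  X.splits_of_section (LR.homOfSome c e ha1 hb)
    (fun (x : k) => show X.proj0 (x • X.E.a0 e) = x by simp [he])
    (fun (x : k) => show X.proj1 (x • e) = x by simp [he])

theorem splits_of_lift_none (X : LExt (LR none) B) {e : X.E.V1}
    (he : X.proj1 e = 1) (ha0 : X.E.a0 e = 0) (hb : X.E.b (X.E.a1 e) = 0) : X.Splits :=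
  X.splits_of_section (LR.homOfNone e ha0 hb)
    (fun (x : k) => show X.proj0 (x • X.E.a1 e) = x by simp [he])
    (fun (x : k) => show X.proj1 (x • e) = x by simp [he])

theorem splits_of_none (X : LExt (LR none) B) (hD : InD X.E) : X.Splits := by
  obtain ⟨q0, q1, ⟨h0, h1, -⟩, ha0, hmap, -, hb, -, hquot⟩ := hD
  obtain ⟨e, he⟩ := X.proj1_surjective 1
  obtain ⟨v', hv'⟩ := (hquot h0 h1).1.2 (q0.mkQ (X.E.a1 e))
  obtain ⟨v, rfl⟩ := q1.mkQ_surjective v'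
  rw [Submodule.mkQ_apply, Submodule.mapQ_apply, Submodule.mkQ_apply, Submodule.Quotient.eq,
    ← hmap] at hv'
  obtain ⟨w, hw, hwv⟩ := hv'
  have hpw : X.proj1 w = -1 := by simpa [he] using congrArg X.proj0 hwv
  exact X.splits_of_lift_none (e := -w) (by simp [hpw]) (by simp [ha0 w hw])
    (by simpa using hb _ (hmap ▸ Submodule.mem_map_of_mem hw))

section

variable {c d : k}

lemma a0_injective (X : LExt (LR (some c)) (LR (some d))) : Function.Injective X.E.a0 := by
  refine (injective_iff_map_eq_zero _).mpr fun v hv => ?_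
  obtain ⟨x, rfl⟩ := X.exists_incl1_eq (by simpa using congrArg X.proj0 hv)
  rw [X.a0_incl1_some, ← X.incl0.map_zero] at hv
  rw [X.incl0_injective hv, map_zero]

theorem splits_of_some_some (X : LExt (LR (some c)) (LR (some d))) (hD : InD X.E) :
    X.Splits := by
  obtain ⟨ν, v, hv, hpv⟩ := hD.exists_a1_eq_smul_a0 X.a0_injective
    (φ := X.proj0) fun h => by simpa [h] using X.proj0_surjective 1
  rw [proj0_a0_some] at hpv
  have hν : ν = c := by
    have := congrArg X.proj0 hv
    simp only [proj0_a1_some, map_smul, proj0_a0_some, smul_eq_mul] at this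
    exact mul_right_cancel₀ hpv this.symm
  subst hν
  exact X.splits_of_lift_some (e := (X.proj1 v)⁻¹ • v) (by simp [hpv])
    (by simp [hv, smul_comm ν]) (hD.b_eq_zero X.a0_injective _)

lemma exists_lift_a1_eq_smul_a0 (X : LExt (LR (some c)) (LR none)) :
    ∃ e, X.proj1 e = 1 ∧ X.E.a1 e = c • X.E.a0 e := by
  obtain ⟨e, he⟩ := X.proj1_surjective 1
  obtain ⟨g, hg⟩ := X.exists_incl0_eq (v := X.E.a1 e - c • X.E.a0 e) (by simp)
  refine ⟨e - X.incl1 g, by simp [he], ?_⟩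
  rw [map_sub, map_sub, a1_incl1_none, a0_incl1_none, hg]
  module

lemma exists_lift_of_not_splits (X : LExt (LR (some c)) (LR none)) (hX : ¬ X.Splits) :
    ∃ e t, X.proj1 e = 1 ∧ X.E.a1 e = c • X.E.a0 e ∧ t ≠ 0 ∧ X.E.b (X.E.a0 e) = X.incl1 t := by
  obtain ⟨e, he, ha1⟩ := X.exists_lift_a1_eq_smul_a0
  obtain ⟨t, ht⟩ := X.exists_incl1_eq (proj1_b X (X.E.a0 e))
  refine ⟨e, t, he, ha1, fun h0 => hX (X.splits_of_lift_some he ha1 ?_), ht.symm⟩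
  rw [← ht, h0, map_zero]

theorem exists_equiv_of_not_splits (X Y : LExt (LR (some c)) (LR none)) (hX : ¬ X.Splits)
    (hY : ¬ Y.Splits) :
    ∃ γ : k, γ ≠ 0 ∧
      ∃ (e0 : X.E.V0 ≃ₗ[k] Y.E.V0) (e1 : X.E.V1 ≃ₗ[k] Y.E.V1),
        (∀ x, e0 (X.E.a0 x) = Y.E.a0 (e1 x)) ∧
        (∀ x, e0 (X.E.a1 x) = Y.E.a1 (e1 x)) ∧
        (∀ x, e1 (X.E.b x) = Y.E.b (e0 x)) ∧
        (∀ x, e0 (X.i.f0 x) = Y.i.f0 (γ • x)) ∧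
        (∀ x, e1 (X.i.f1 x) = Y.i.f1 (γ • x)) ∧
        (∀ x, Y.p.f0 (e0 x) = X.p.f0 x) ∧
        (∀ x, Y.p.f1 (e1 x) = X.p.f1 x) := by
  obtain ⟨eX, tX, hXe, hXa1, htX, hXb⟩ := X.exists_lift_of_not_splits hX
  obtain ⟨eY, tY, hYe, hYa1, htY, hYb⟩ := Y.exists_lift_of_not_splits hY
  have hγ : tY / tX ≠ 0 := div_ne_zero htY htX
  have hXe0 : X.proj0 (X.E.a0 eX) = 1 := by simpa using hXe
  have hYe0 : Y.proj0 (Y.E.a0 eY) = 1 := by simpa using hYe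
  let f0 := exactEquiv X.incl0_injective X.exact_incl0_proj0 hXe0 Y.incl0_injective
    Y.exact_incl0_proj0 hYe0 hγ
  let f1 := exactEquiv X.incl1_injective X.exact_incl1_proj1 hXe Y.incl1_injective
    Y.exact_incl1_proj1 hYe hγ
  have f0_incl : ∀ x, f0 (X.incl0 x) = Y.incl0 (tY / tX * x) := fun x =>
    exactEquiv_apply_incl ..
  have f1_incl : ∀ x, f1 (X.incl1 x) = Y.incl1 (tY / tX * x) := fun x =>
    exactEquiv_apply_incl ..
  have f0_lift : f0 (X.E.a0 eX) = Y.E.a0 eY := exactEquiv_apply_lift ..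
  have f1_lift : f1 eX = eY := exactEquiv_apply_lift ..
  let bX0 := basisOfExact X.incl0_injective X.exact_incl0_proj0 hXe0 one_ne_zero
  let bX1 := basisOfExact X.incl1_injective X.exact_incl1_proj1 hXe one_ne_zero
  have ha0 : f0.toLinearMap ∘ₗ X.E.a0 = Y.E.a0 ∘ₗ f1 :=
    bX1.ext fun j => by fin_cases j <;> simp [bX1, f1_incl, f0_lift, f1_lift]
  have ha1 : f0.toLinearMap ∘ₗ X.E.a1 = Y.E.a1 ∘ₗ f1 :=
    bX1.ext fun j => by fin_cases j <;> simp [bX1, f0_incl, f1_incl, f0_lift, f1_lift, hXa1, hYa1]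
  have hb : f1.toLinearMap ∘ₗ X.E.b = Y.E.b ∘ₗ f0 :=
    bX0.ext fun j => by fin_cases j <;> simp [bX0, f0_incl, f1_incl, f0_lift, hXb, hYb, htX]
  exact ⟨tY / tX, hγ, f0, f1, LinearMap.congr_fun ha0, LinearMap.congr_fun ha1,
    LinearMap.congr_fun hb, f0_incl, f1_incl,
    fun v => show Y.proj0 (f0 v) = X.proj0 v from proj_exactEquiv ..,
    fun v => show Y.proj1 (f1 v) = X.proj1 v from proj_exactEquiv ..⟩

end

end LExt

/-- In coordinates `(x, y)`, `x` spans the submodule `R(∞)` and `y` the quotient `R(λ)`;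
`β (x, y) = (y, 0)`. -/
abbrev nonsplitRep (c : k) : LRep k where
  V0 := k × k
  V1 := k × k
  fd0 := inferInstance
  fd1 := inferInstance
  a0 := LinearMap.inr k k k ∘ₗ LinearMap.snd k k k
  a1 := LinearMap.prodMap LinearMap.id (c • LinearMap.id)
  b := LinearMap.inl k k k ∘ₗ LinearMap.snd k k k
  rel0 := by ext <;> simp
  rel1 := by ext <;> simp

def nonsplitExt (c : k) : LExt (LR (some c)) (LR none) where
  E := nonsplitRep c
  i :=
    { f0 := LinearMap.inl k k k
      f1 := LinearMap.inl k k k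
      comma0 := LinearMap.ext fun _ => rfl
      comma1 := LinearMap.ext fun (x : k) => show ((x, 0) : k × k) = (x, c • (0 : k)) by simp
      commb := LinearMap.ext fun _ => rfl }
  p :=
    { f0 := LinearMap.snd k k k
      f1 := LinearMap.snd k k k
      comma0 := LinearMap.ext fun _ => rfl
      comma1 := LinearMap.ext fun _ => rfl
      commb := LinearMap.ext fun _ => rfl }
  inj0 _ _ h := congrArg Prod.fst h
  inj1 _ _ h := congrArg Prod.fst h
  surj0 y := ⟨(0, y), rfl⟩
  surj1 y := ⟨(0, y), rfl⟩
  exact0 := LinearMap.range_inl k k k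
  exact1 := LinearMap.range_inl k k k

lemma nonsplitExt_not_splits (c : k) : ¬ (nonsplitExt c).Splits := by
  rintro ⟨r, -, hr1⟩
  have h := r.map_b (show (nonsplitExt c).E.V0 from ((0 : k), (1 : k)))
  exact (one_ne_zero : (1 : k) ≠ 0) ((hr1 (1 : k)).symm.trans h)

lemma inD_nonsplitRep (c : k) : InD (nonsplitRep c) := by
  let q := LinearMap.ker (LinearMap.snd k k k)
  refine ⟨q, q, ⟨?_, ?_, ?_⟩, ?_, ?map, ?_, ?_, fun x => by simp [q], fun h0 h1 => ?quot⟩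
  case map =>
    ext w
    simp only [Submodule.mem_map, q, LinearMap.mem_ker, LinearMap.snd_apply]
    refine ⟨?_, fun hw => ⟨w, hw, ?_⟩⟩
    · rintro ⟨y, hy, rfl⟩
      simp [hy]
    · simp [Prod.ext_iff, hw]
  case quot =>
    have ha0 : q.mapQ q (nonsplitRep c).a0 h0 = LinearMap.id :=
      Submodule.linearMap_qext _ (LinearMap.ext fun x => by simp [Submodule.Quotient.eq, q])
    refine ⟨ha0 ▸ Function.bijective_id, q.mapQ q (nonsplitRep c).a1 h1,
      by rw [ha0, LinearMap.comp_id], eq_top_iff.mpr fun w _ => ?_⟩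
    refine Submodule.mem_iSup_of_mem c (Module.End.mem_eigenspace_iff.mpr ?_)
    obtain ⟨x, rfl⟩ := q.mkQ_surjective w
    rw [Submodule.mkQ_apply, Submodule.mapQ_apply, ← Submodule.Quotient.mk_smul,
      Submodule.Quotient.eq]
    simp [q]
  all_goals intro x hx; simp_all [q, Prod.ext_iff]

theorem stmt14_general (k : Type) [Field k] (l m : Option k) :
    (((∃ c : k, l = some c) ∧ m = none) →
      ((∃ X : LExt (LR l) (LR m), InD X.E ∧ ¬ X.Splits) ∧
       (∀ X Y : LExt (LR l) (LR m), InD X.E → InD Y.E → ¬ X.Splits → ¬ Y.Splits →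
         ∃ c : k, c ≠ 0 ∧
         ∃ (e0 : X.E.V0 ≃ₗ[k] Y.E.V0) (e1 : X.E.V1 ≃ₗ[k] Y.E.V1),
           (∀ x, e0 (X.E.a0 x) = Y.E.a0 (e1 x)) ∧
           (∀ x, e0 (X.E.a1 x) = Y.E.a1 (e1 x)) ∧
           (∀ x, e1 (X.E.b x) = Y.E.b (e0 x)) ∧
           (∀ x, e0 (X.i.f0 x) = Y.i.f0 (c • x)) ∧
           (∀ x, e1 (X.i.f1 x) = Y.i.f1 (c • x)) ∧
           (∀ x, Y.p.f0 (e0 x) = X.p.f0 x) ∧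
           (∀ x, Y.p.f1 (e1 x) = X.p.f1 x)))) ∧
    (¬ ((∃ c : k, l = some c) ∧ m = none) →
      ∀ X : LExt (LR l) (LR m), InD X.E → X.Splits) := by
  refine ⟨?_, fun hlm X hD => ?_⟩
  · rintro ⟨⟨c, rfl⟩, rfl⟩
    exact ⟨⟨nonsplitExt c, inD_nonsplitRep c, nonsplitExt_not_splits c⟩,
      fun X Y _ _ hX hY => X.exists_equiv_of_not_splits Y hX hY⟩
  rcases l with _ | c
  · exact X.splits_of_none hD
  rcases m with _ | d
  · exact absurd ⟨⟨c, rfl⟩, rfl⟩ hlm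
  · exact X.splits_of_some_some hD

/-- Ext¹ computed in D satisfies Ext¹_D(R(λ), R(μ)) ≅ k when
λ ∈ k and μ = ∞ (there is a nonsplit extension with middle term in D, and any
two such are equivalent after rescaling by a nonzero scalar c ∈ k, so the Ext
group is one-dimensional) and Ext¹_D(R(λ), R(μ)) = 0 otherwise (every extension
with middle term in D splits). -/
theorem stmt14 (k : Type) [Field k] [IsAlgClosed k] (l m : Option k) :
    (((∃ c : k, l = some c) ∧ m = none) →
      ((∃ X : LExt (LR l) (LR m), InD X.E ∧ ¬ X.Splits) ∧
       (∀ X Y : LExt (LR l) (LR m), InD X.E → InD Y.E → ¬ X.Splits → ¬ Y.Splits →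
         ∃ c : k, c ≠ 0 ∧
         ∃ (e0 : X.E.V0 ≃ₗ[k] Y.E.V0) (e1 : X.E.V1 ≃ₗ[k] Y.E.V1),
           (∀ x, e0 (X.E.a0 x) = Y.E.a0 (e1 x)) ∧
           (∀ x, e0 (X.E.a1 x) = Y.E.a1 (e1 x)) ∧
           (∀ x, e1 (X.E.b x) = Y.E.b (e0 x)) ∧
           (∀ x, e0 (X.i.f0 x) = Y.i.f0 (c • x)) ∧
           (∀ x, e1 (X.i.f1 x) = Y.i.f1 (c • x)) ∧
           (∀ x, Y.p.f0 (e0 x) = X.p.f0 x) ∧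
           (∀ x, Y.p.f1 (e1 x) = X.p.f1 x)))) ∧
    (¬ ((∃ c : k, l = some c) ∧ m = none) →
      ∀ X : LExt (LR l) (LR m), InD X.E → X.Splits) :=
  stmt14_general k l m
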